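/- arXiv:2202.11007 — 2 statements merged into one kernel-verified Lean document; each statement's English description precedes it below -/
import Mathlib

section
/- Let T > 0, m > 0 and H ≥ 0 with H/m < 1. Let y : [0,T] → ℝ be differentiable with −H ≤ y′(t) + m·y(t) ≤ H for every t ∈ [0,T], and assume |y(0)| < 1. Then, setting δ := min(1 − |y(0)|, 1 − H/m) > 0, one has |y(t)| ≤ 1 − δ for every t ∈ [0,T]. -/
/-!
The weight `exp (m t)` turns `y' + m y ≤ H` into `(exp (m t) (y t - H/m))' ≤ 0`, so
`exp (m t) (y t - H/m)` cannot exceed its initial value `y 0 - H/m`. Since `exp (m t) ≥ 1`,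
`y` can therefore never rise above `max (y 0) (H/m)`; applied to `-y` this gives
`|y t| ≤ max |y 0| (H/m) = 1 - min (1 - |y 0|) (1 - H/m)`.
-/

open Set Real

section Comparison

variable {a b m c : ℝ} {y y' : ℝ → ℝ}

theorem antitoneOn_exp_mul_sub_of_hasDerivWithinAt
    (hderiv : ∀ t ∈ Icc a b, HasDerivWithinAt y (y' t) (Icc a b) t)
    (hy' : ∀ t ∈ Icc a b, y' t ≤ m * (c - y t)) :
    AntitoneOn (fun t => exp (m * (t - a)) * (y t - c)) (Icc a b) := by
  have hexp : ∀ t, HasDerivAt (fun s => exp (m * (s - a))) (exp (m * (t - a)) * m) t := fun t =>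
    ((hasDerivAt_id t).sub_const a |>.const_mul m).exp.congr_deriv (by simp)
  refine antitoneOn_of_hasDerivWithinAt_nonpos (convex_Icc a b)
    (f' := fun t => exp (m * (t - a)) * (y' t - m * (c - y t))) ?_ (fun t ht => ?_) (fun t ht => ?_)
  · exact (continuous_exp.comp (by fun_prop)).continuousOn.mul
      (ContinuousOn.sub (fun t ht => (hderiv t ht).continuousWithinAt) continuousOn_const)
  · have hy := ((hderiv t (interior_subset ht)).mono interior_subset).sub_const c
    exact ((hexp t).hasDerivWithinAt.mul hy).congr_deriv (by ring)
  · exact mul_nonpos_of_nonneg_of_nonpos (exp_pos _).le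
      (sub_nonpos.2 (hy' t (interior_subset ht)))

theorem le_max_of_hasDerivWithinAt_le_mul_sub (hm : 0 ≤ m)
    (hderiv : ∀ t ∈ Icc a b, HasDerivWithinAt y (y' t) (Icc a b) t)
    (hy' : ∀ t ∈ Icc a b, y' t ≤ m * (c - y t)) {t : ℝ} (ht : t ∈ Icc a b) :
    y t ≤ max (y a) c := by
  by_contra! hlt
  have hpos : 0 < y t - c := sub_pos.2 (le_max_right _ _ |>.trans_lt hlt)
  have hexp : 1 ≤ exp (m * (t - a)) := one_le_exp (mul_nonneg hm (sub_nonneg.2 ht.1))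
  have hdecay := antitoneOn_exp_mul_sub_of_hasDerivWithinAt hderiv hy'
    (left_mem_Icc.2 (ht.1.trans ht.2)) ht ht.1
  simp only [sub_self, mul_zero, exp_zero, one_mul] at hdecay
  nlinarith [le_max_left (y a) c]

end Comparison

theorem stmt1_general (T m H : ℝ) (hm : 0 < m) (hHm : H / m < 1)
    (y y' : ℝ → ℝ)
    (hderiv : ∀ t ∈ Set.Icc (0:ℝ) T, HasDerivWithinAt y (y' t) (Set.Icc (0:ℝ) T) t)
    (hineq : ∀ t ∈ Set.Icc (0:ℝ) T, -H ≤ y' t + m * y t ∧ y' t + m * y t ≤ H)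
    (h0 : |y 0| < 1) :
    0 < min (1 - |y 0|) (1 - H / m) ∧
    ∀ t ∈ Set.Icc (0:ℝ) T, |y t| ≤ 1 - min (1 - |y 0|) (1 - H / m) := by
  refine ⟨lt_min (by linarith) (by linarith), fun t ht => ?_⟩
  have hmH : m * (H / m) = H := mul_div_cancel₀ H hm.ne'
  have hupper : y t ≤ max (y 0) (H / m) :=
    le_max_of_hasDerivWithinAt_le_mul_sub hm.le hderiv
      (fun s hs => by linarith [(hineq s hs).2]) ht
  have hlower : -y t ≤ max (-y 0) (H / m) :=
    le_max_of_hasDerivWithinAt_le_mul_sub (y := fun s => -y s) hm.le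
      (fun s hs => (hderiv s hs).neg) (fun s hs => by linarith [(hineq s hs).1]) ht
  rw [min_sub_sub_left, sub_sub_cancel]
  exact abs_le.2 ⟨by linarith [max_le_max_right (H / m) (neg_le_abs (y 0))],
    hupper.trans (max_le_max_right _ (le_abs_self _))⟩

/-- Mass confinement: if `-H ≤ y' + m y ≤ H` on `[0,T]`, `H/m < 1` and `|y(0)| < 1`, then
with `δ := min (1 - |y 0|) (1 - H/m) > 0` one has `|y t| ≤ 1 - δ` on `[0,T]`. -/
theorem stmt1 (T m H : ℝ) (hT : 0 < T) (hm : 0 < m) (hH : 0 ≤ H) (hHm : H / m < 1)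
    (y y' : ℝ → ℝ)
    (hderiv : ∀ t ∈ Set.Icc (0:ℝ) T, HasDerivWithinAt y (y' t) (Set.Icc (0:ℝ) T) t)
    (hineq : ∀ t ∈ Set.Icc (0:ℝ) T, -H ≤ y' t + m * y t ∧ y' t + m * y t ≤ H)
    (h0 : |y 0| < 1) :
    0 < min (1 - |y 0|) (1 - H / m) ∧
    ∀ t ∈ Set.Icc (0:ℝ) T, |y t| ≤ 1 - min (1 - |y 0|) (1 - H / m) :=
  stmt1_general T m H hm hHm y y' hderiv hineq h0
end

section
/- Let f : (−1, 1) → ℝ be nondecreasing with f(0) = 0, let δ ∈ (0, 1), and let m ∈ ℝ with |m| ≤ 1 − δ. Then, with C₀ := max(|f(1 − δ/2)|, |f(−1 + δ/2)|) and c := (2 + δ/2)·C₀, one has f(r)·(r − m) ≥ (δ/2)·|f(r)| − c for every r ∈ (−1, 1). -/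
/-!
Split `(-1, 1)` at `±(1 - δ/2)`. Near the endpoints `r - m` has the sign of `r`, hence of `f r`,
and `|r - m| ≥ δ/2`, so `f r * (r - m) ≥ (δ/2) |f r|`. In the middle, monotonicity bounds `|f r|`
by the constant `C₀`, and `|r - m| ≤ 2` gives `f r * (r - m) ≥ -2 C₀ ≥ (δ/2) |f r| - (2 + δ/2) C₀`.
-/

lemma mul_abs_le_mul_of_nonneg_of_le_abs {a b ε : ℝ} (hab : 0 ≤ a * b) (hb : ε ≤ |b|) :
    ε * |a| ≤ a * b := by
  calc ε * |a| ≤ |b| * |a| := mul_le_mul_of_nonneg_right hb (abs_nonneg a)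
    _ = a * b := by rw [mul_comm, ← abs_mul, abs_of_nonneg hab]

lemma neg_mul_le_mul_of_abs_le {a b A B : ℝ} (ha : |a| ≤ A) (hb : |b| ≤ B) :
    -(A * B) ≤ a * b := by
  have hab : |a * b| ≤ A * B := by
    rw [abs_mul]
    exact mul_le_mul ha hb (abs_nonneg b) ((abs_nonneg a).trans ha)
  linarith [neg_abs_le (a * b)]

lemma MonotoneOn.abs_le_max_abs {f : ℝ → ℝ} {s : Set ℝ} (hf : MonotoneOn f s) {a b r : ℝ}
    (ha : a ∈ s) (hb : b ∈ s) (hr : r ∈ s) (har : a ≤ r) (hrb : r ≤ b) :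
    |f r| ≤ max |f b| |f a| := by
  have hlo : f a ≤ f r := hf ha hr har
  have hhi : f r ≤ f b := hf hr hb hrb
  rw [abs_le]
  constructor
  · linarith [neg_abs_le (f a), le_max_right |f b| |f a|]
  · linarith [le_abs_self (f b), le_max_left |f b| |f a|]

/-- Pointwise coercivity estimate behind (co:17): for a nondecreasing `f` on `(-1,1)` with
`f 0 = 0` and a mean `m` with `|m| ≤ 1 - δ`, one has `f(r)(r-m) ≥ (δ/2)|f r| - c`. -/
theorem stmt6 (f : ℝ → ℝ)
    (hmono : ∀ r ∈ Set.Ioo (-1:ℝ) 1, ∀ s ∈ Set.Ioo (-1:ℝ) 1, r ≤ s → f r ≤ f s)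
    (hf0 : f 0 = 0) (δ : ℝ) (hδ : δ ∈ Set.Ioo (0:ℝ) 1) (m : ℝ) (hm : |m| ≤ 1 - δ) :
    ∀ r ∈ Set.Ioo (-1:ℝ) 1,
      f r * (r - m) ≥
        (δ / 2) * |f r| - (2 + δ / 2) * max |f (1 - δ / 2)| |f (-1 + δ / 2)| := by
  obtain ⟨hδ0, hδ1⟩ := hδ
  intro r hr
  have hf : MonotoneOn f (Set.Ioo (-1) 1) := fun a ha b hb hab => hmono a ha b hb hab
  have h0 : (0 : ℝ) ∈ Set.Ioo (-1) 1 := by constructor <;> norm_num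
  obtain ⟨hm_lo, hm_hi⟩ := abs_le.mp hm
  set C := max |f (1 - δ / 2)| |f (-1 + δ / 2)|
  have hc : 0 ≤ (2 + δ / 2) * C := by positivity
  rcases le_or_gt (1 - δ / 2) r with hnear_one | hbelow
  · have hfr : 0 ≤ f r := hf0 ▸ hf h0 hr (by linarith)
    have hrm : δ / 2 ≤ r - m := by linarith
    have := mul_abs_le_mul_of_nonneg_of_le_abs (mul_nonneg hfr (by linarith))
      (hrm.trans (le_abs_self _))
    linarith
  rcases le_or_gt r (-1 + δ / 2) with hnear_neg_one | habove
  · have hfr : f r ≤ 0 := hf0 ▸ hf hr h0 (by linarith)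
    have hrm : r - m ≤ -(δ / 2) := by linarith
    have := mul_abs_le_mul_of_nonneg_of_le_abs (mul_nonneg_of_nonpos_of_nonpos hfr (by linarith))
      (le_neg.mp hrm |>.trans (neg_le_abs _))
    linarith
  · have hfC : |f r| ≤ C := hf.abs_le_max_abs (by constructor <;> linarith)
      (by constructor <;> linarith) hr habove.le hbelow.le
    have hrm : |r - m| ≤ 2 := abs_le.mpr ⟨by linarith [hr.1], by linarith [hr.2]⟩
    have := neg_mul_le_mul_of_abs_le hfC hrm
    have := mul_le_mul_of_nonneg_left hfC (by linarith : 0 ≤ δ / 2)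
    linarith
end
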